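/- With the same setup as the comparison lemma (P₁⁻¹A₁' = P₂⁻¹A₂', Qᵢ' proportional to Pᵢ·V^{k/2-1}, Θᵢ = Aᵢ/Qᵢ, Θ₁(t₀)=Θ₂(t₀)), if instead P₂/Q₂ ≤ P₁/Q₁ pointwise and Θ₂ is increasing, then Θ₁ ≥ Θ₂ on the whole interval. -/

import Mathlib

/-!
Statement 7 (Comparison Lemma, part 2, in ODE form): with the same setup as the
Comparison Lemma (coarea relation `P₁⁻¹A₁' = P₂⁻¹A₂'`, tube volumes `Qᵢ' = ω·Pᵢ·W`,
densities `Θᵢ = Aᵢ/Qᵢ` agreeing at `t₀`), if instead `P₂/Q₂ ≤ P₁/Q₁` pointwise and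
`Θ₂` is increasing, then `Θ₁ ≥ Θ₂` on the whole interval.
-/

open Set Filter Topology

lemma deriv_nonneg_of_monotoneOn {f : ℝ → ℝ} {t₀ T t d : ℝ}
    (hmono : MonotoneOn f (Ico t₀ T)) (ht : t ∈ Ioo t₀ T)
    (hd : HasDerivAt f d t) : 0 ≤ d := by
  have h := hasDerivAt_iff_tendsto_slope.mp hd
  have h' : Tendsto (slope f t) (𝓝[>] t) (𝓝 d) :=
    h.mono_left (nhdsWithin_mono _ (fun x hx => ne_of_gt hx))
  refine ge_of_tendsto h' ?_
  filter_upwards [Ioo_mem_nhdsGT_of_mem ⟨le_refl t, ht.2⟩] with s hs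
  have hts : t ∈ Ico t₀ T := ⟨ht.1.le, ht.2⟩
  have hss : s ∈ Ico t₀ T := ⟨ht.1.le.trans hs.1.le, hs.2⟩
  have := hmono hts hss hs.1.le
  rw [slope_def_field]
  exact div_nonneg (by linarith) (by linarith [hs.1])

theorem comparison_lemma_stronger_weight
    (t₀ T : ℝ) (hT : t₀ < T)
    (A₁ A₂ Q₁ Q₂ P₁ P₂ a₁ a₂ W : ℝ → ℝ) (ω : ℝ) (hω : 0 < ω)
    (hP₁ : ∀ t ∈ Ico t₀ T, 0 < P₁ t) (hP₂ : ∀ t ∈ Ico t₀ T, 0 < P₂ t)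
    (hW : ∀ t ∈ Ico t₀ T, 0 < W t)
    (hQ₁pos : ∀ t ∈ Ico t₀ T, 0 < Q₁ t) (hQ₂pos : ∀ t ∈ Ico t₀ T, 0 < Q₂ t)
    (hQ₁' : ∀ t ∈ Ico t₀ T, HasDerivAt Q₁ (ω * P₁ t * W t) t)
    (hQ₂' : ∀ t ∈ Ico t₀ T, HasDerivAt Q₂ (ω * P₂ t * W t) t)
    (hA₁' : ∀ t ∈ Ico t₀ T, HasDerivAt A₁ (a₁ t) t)
    (hA₂' : ∀ t ∈ Ico t₀ T, HasDerivAt A₂ (a₂ t) t)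
    -- coarea relation: (1/P₁)·A₁' = (1/P₂)·A₂', a common nonnegative density
    (hcoarea : ∀ t ∈ Ico t₀ T, a₁ t / P₁ t = a₂ t / P₂ t)
    (hnn : ∀ t ∈ Ico t₀ T, 0 ≤ a₁ t)
    -- weight (P₂) is weaker than (P₁)
    (hweak : ∀ t ∈ Ico t₀ T, P₂ t / Q₂ t ≤ P₁ t / Q₁ t)
    -- Θ₂ is increasing
    (hmono : MonotoneOn (fun t => A₂ t / Q₂ t) (Ico t₀ T))
    -- densities agree at t₀
    (heq : A₁ t₀ / Q₁ t₀ = A₂ t₀ / Q₂ t₀) :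
    ∀ t ∈ Ico t₀ T, A₂ t / Q₂ t ≤ A₁ t / Q₁ t := by
  -- G = A₁ - Q₁ · Θ₂ ; show G monotone on Ico, G t₀ = 0, conclude.
  set G : ℝ → ℝ := fun t => A₁ t - Q₁ t * (A₂ t / Q₂ t) with hG
  -- derivative of Θ₂ and of G at each point of Ico
  have hΘ₂' : ∀ t ∈ Ico t₀ T, HasDerivAt (fun t => A₂ t / Q₂ t)
      ((a₂ t * Q₂ t - A₂ t * (ω * P₂ t * W t)) / Q₂ t ^ 2) t := fun t ht =>
    (hA₂' t ht).div (hQ₂' t ht) (hQ₂pos t ht).ne'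
  have hGd : ∀ t ∈ Ico t₀ T, HasDerivAt G
      (a₁ t - ((ω * P₁ t * W t) * (A₂ t / Q₂ t)
        + Q₁ t * ((a₂ t * Q₂ t - A₂ t * (ω * P₂ t * W t)) / Q₂ t ^ 2))) t := fun t ht =>
    (hA₁' t ht).sub ((hQ₁' t ht).mul (hΘ₂' t ht))
  have hGmono : MonotoneOn G (Ico t₀ T) := by
    apply monotoneOn_of_deriv_nonneg (convex_Ico t₀ T)
    · exact fun t ht => ((hGd t ht).continuousAt).continuousWithinAt
    · rw [interior_Ico]
      exact fun t ht => ((hGd t ⟨ht.1.le, ht.2⟩).differentiableAt).differentiableWithinAt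
    · rw [interior_Ico]
      intro t ht
      have htI : t ∈ Ico t₀ T := ⟨ht.1.le, ht.2⟩
      rw [(hGd t htI).deriv]
      have hQ₁p := hQ₁pos t htI; have hQ₂p := hQ₂pos t htI
      have hP₁p := hP₁ t htI; have hP₂p := hP₂ t htI
      have hWp := hW t htI
      -- Θ₂' ≥ 0 at interior points
      have hd₂ : 0 ≤ (a₂ t * Q₂ t - A₂ t * (ω * P₂ t * W t)) / Q₂ t ^ 2 :=
        deriv_nonneg_of_monotoneOn hmono ht (hΘ₂' t htI)
      -- so ρ - ωWΘ₂ ≥ 0 where ρ = a₂/P₂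
      have hfactor : 0 ≤ a₂ t / P₂ t - ω * W t * (A₂ t / Q₂ t) := by
        have h1 : (a₂ t * Q₂ t - A₂ t * (ω * P₂ t * W t)) / Q₂ t ^ 2
            = (P₂ t / Q₂ t) * (a₂ t / P₂ t - ω * W t * (A₂ t / Q₂ t)) := by
          field_simp
        rw [h1] at hd₂
        have : 0 < P₂ t / Q₂ t := div_pos hP₂p hQ₂p
        exact nonneg_of_mul_nonneg_right (by linarith [hd₂]) this
      -- also P₁ - Q₁·P₂/Q₂ ≥ 0
      have hfactor2 : 0 ≤ P₁ t - Q₁ t * (P₂ t / Q₂ t) := by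
        have := hweak t htI
        have h2 : Q₁ t * (P₂ t / Q₂ t) ≤ Q₁ t * (P₁ t / Q₁ t) :=
          mul_le_mul_of_nonneg_left this hQ₁p.le
        have h3 : Q₁ t * (P₁ t / Q₁ t) = P₁ t := by field_simp
        linarith
      -- rewrite deriv G as product
      have ha₁ : a₁ t = P₁ t * (a₂ t / P₂ t) := by
        have := hcoarea t htI
        field_simp at this
        field_simp
        linarith [this]
      have key : a₁ t - ((ω * P₁ t * W t) * (A₂ t / Q₂ t)
          + Q₁ t * ((a₂ t * Q₂ t - A₂ t * (ω * P₂ t * W t)) / Q₂ t ^ 2))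
          = (a₂ t / P₂ t - ω * W t * (A₂ t / Q₂ t)) * (P₁ t - Q₁ t * (P₂ t / Q₂ t)) := by
        rw [ha₁]; field_simp; ring
      rw [key]
      exact mul_nonneg hfactor hfactor2
  -- conclude
  intro t ht
  have ht₀ : t₀ ∈ Ico t₀ T := ⟨le_refl _, hT⟩
  have hG0 : G t₀ = 0 := by
    have hQ₁p := hQ₁pos t₀ ht₀
    simp only [hG]
    rw [← heq]
    field_simp; ring
  have : 0 ≤ G t := by
    have := hGmono ht₀ ht ht.1
    linarith [hG0 ▸ this]
  have hQ₁p := hQ₁pos t ht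
  rw [div_le_div_iff₀ (hQ₂pos t ht) hQ₁p] at *
  -- from 0 ≤ A₁ - Q₁·(A₂/Q₂)
  simp only [hG] at this
  have h4 : Q₁ t * (A₂ t / Q₂ t) ≤ A₁ t := by linarith
  calc A₂ t * Q₁ t = Q₁ t * (A₂ t / Q₂ t) * Q₂ t := by
        rw [mul_assoc, div_mul_cancel₀ _ (hQ₂pos t ht).ne', mul_comm]
    _ ≤ A₁ t * Q₂ t := mul_le_mul_of_nonneg_right h4 (hQ₂pos t ht).le
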